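/- Let G be a finite graph and K a clique of G. Let P and Q be two longest paths of G such that each of them is extreme-separated by K and each of them touches K at most twice (i.e., |V(P) ∩ K| ≤ 2 and |V(Q) ∩ K| ≤ 2). Then V(P) ∩ V(Q) ∩ K ≠ ∅; that is, P and Q have a common vertex belonging to K. -/

import Mathlib

open SimpleGraph

/-- `p` is a longest path of `G`: it is a path, and no path of `G` is longer. -/
def IsLongestPath {V : Type*} (G : SimpleGraph V) {u v : V} (p : G.Walk u v) : Prop :=
  p.IsPath ∧ ∀ ⦃a b : V⦄ (q : G.Walk a b), q.IsPath → q.length ≤ p.length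

/-- `a` and `b` lie in the same connected component of `G - S`: there is a walk from `a`
to `b` avoiding `S`. -/
def ConnAvoiding {V : Type*} (G : SimpleGraph V) (S : Set V) (a b : V) : Prop :=
  ∃ w : G.Walk a b, ∀ x ∈ w.support, x ∉ S

/-- The path `p` crosses `S`: two of its vertices outside `S` lie in different connected
components of `G - S`. -/
def Crosses {V : Type*} (G : SimpleGraph V) (S : Set V) {u v : V} (p : G.Walk u v) : Prop :=
  ∃ a ∈ p.support, ∃ b ∈ p.support, a ∉ S ∧ b ∉ S ∧ ¬ ConnAvoiding G S a b

/-- The path `p` (from `u` to `v`), which contains a vertex not in `S` and does not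
contain all of `S`, is extreme-separated by `S`: it crosses `S`, neither extreme lies in
`S`, and its extremes lie in different components of `G - S`. -/
def ExtremeSeparated {V : Type*} (G : SimpleGraph V) (S : Set V) {u v : V}
    (p : G.Walk u v) : Prop :=
  (∃ a ∈ p.support, a ∉ S) ∧ (∃ x ∈ S, x ∉ p.support) ∧ Crosses G S p ∧
    u ∉ S ∧ v ∉ S ∧ ¬ ConnAvoiding G S u v

/-!
Suppose `P` and `Q` share no vertex of `K`. Let `a₁` and `a₂` be the first and the last vertex of
`P` in `K`; as `P` touches `K` at most twice, its vertices outside `K` lie in the component of `u₁`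
(before `a₁`), in that of `v₁` (after `a₂`), or in a single further component (between them), and
the first two differ. Cutting `P` at `a₁` or at `a₂` puts this middle component on either side,
and likewise for `Q`. Comparing components gives cuts `P = P₁P₂` at `a` and `Q = Q₁Q₂` at `b`
(after reversing `Q` if needed) with `P₁, Q₁` and `P₂, Q₂` vertex-disjoint. Since `ab` is an edge
of the clique, `P₁ · ab · Q₁⁻¹` and `P₂⁻¹ · ab · Q₂` are paths of total length `|P| + |Q| + 2`,
so one of them is longer than a longest path.
-/

theorem Finset.eq_or_eq_of_card_le_two {α : Type*} [DecidableEq α] {s : Finset α} {a b c : α}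
    (hs : s.card ≤ 2) (ha : a ∈ s) (hb : b ∈ s) (hab : a ≠ b) (hc : c ∈ s) : c = a ∨ c = b := by
  have : s = {a, b} :=
    (Finset.eq_of_subset_of_card_le (Finset.insert_subset ha (by simpa)) (by
      rw [Finset.card_pair hab]; exact hs)).symm
  simpa [this] using hc

namespace SimpleGraph.Walk

variable {V : Type*} {G : SimpleGraph V}

theorem exists_eq_append_first_mem {S : Set V} {x y : V} (p : G.Walk x y)
    (h : ∃ z ∈ p.support, z ∈ S) :
    ∃ a ∈ S, ∃ (p₁ : G.Walk x a) (p₂ : G.Walk a y),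
      p = p₁.append p₂ ∧ ∀ z ∈ p₁.support, z ∈ S → z = a := by
  induction p with
  | nil =>
    obtain ⟨z, hz, hzS⟩ := h
    rw [support_nil, List.mem_singleton] at hz
    subst hz
    exact ⟨z, hzS, nil, nil, rfl, by simp⟩
  | @cons u _ _ e q ih =>
    by_cases hu : u ∈ S
    · exact ⟨u, hu, nil, cons e q, rfl, by simp⟩
    · obtain ⟨a, haS, q₁, q₂, rfl, hq₁⟩ := ih (by simpa [hu] using h)
      refine ⟨a, haS, cons e q₁, q₂, rfl, ?_⟩
      simp only [support_cons, List.mem_cons, forall_eq_or_imp]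
      exact ⟨fun h => absurd h hu, hq₁⟩

theorem IsPath.append_cons_reverse {s a t b : V} {p : G.Walk s a} {q : G.Walk t b}
    (hp : p.IsPath) (hq : q.IsPath) (hpq : p.support.Disjoint q.support) (h : G.Adj a b) :
    (p.append (cons h q.reverse)).IsPath := by
  rw [isPath_def, support_append, support_cons, List.tail_cons, List.nodup_append,
    support_reverse, List.nodup_reverse]
  exact ⟨hp.support_nodup, hq.support_nodup, fun x hx y hy => by
    rintro rfl; exact hpq hx (List.mem_reverse.1 hy)⟩

end SimpleGraph.Walk

section

variable {V : Type*} {G : SimpleGraph V} {S : Set V}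

theorem IsLongestPath.reverse {u v : V} {p : G.Walk u v} (hp : IsLongestPath G p) :
    IsLongestPath G p.reverse :=
  ⟨hp.1.reverse, fun _ _ q hq => p.length_reverse ▸ hp.2 q hq⟩

theorem ConnAvoiding.symm {a b : V} (h : ConnAvoiding G S a b) : ConnAvoiding G S b a := by
  obtain ⟨w, hw⟩ := h
  exact ⟨w.reverse, fun x hx => hw x (by simpa using hx)⟩

theorem ConnAvoiding.trans {a b c : V} (h₁ : ConnAvoiding G S a b)
    (h₂ : ConnAvoiding G S b c) : ConnAvoiding G S a c := by
  obtain ⟨w₁, hw₁⟩ := h₁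
  obtain ⟨w₂, hw₂⟩ := h₂
  exact ⟨w₁.append w₂, fun x hx => ((Walk.mem_support_append_iff _ _).1 hx).elim (hw₁ x) (hw₂ x)⟩

/-- The component of `a` in `G - S`; it is empty when `a ∈ S`. -/
def avoidingComponent (G : SimpleGraph V) (S : Set V) (a : V) : Set V :=
  {b | ConnAvoiding G S a b}

theorem ConnAvoiding.avoidingComponent_eq {a b : V} (h : ConnAvoiding G S a b) :
    avoidingComponent G S a = avoidingComponent G S b :=
  Set.ext fun _ => ⟨h.symm.trans, h.trans⟩

theorem avoidingComponent_ne {a b : V} (hb : b ∉ S) (h : ¬ConnAvoiding G S a b) :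
    avoidingComponent G S a ≠ avoidingComponent G S b := by
  intro heq
  have hbb : b ∈ avoidingComponent G S b := ⟨Walk.nil, by simpa using hb⟩
  rw [← heq] at hbb
  exact h hbb

theorem List.Disjoint.of_avoidingComponent {l₁ l₂ : List V} {A B : Set (Set V)}
    (hS : ∀ z ∈ S, z ∈ l₁ → z ∉ l₂) (h₁ : ∀ z ∈ l₁, z ∉ S → avoidingComponent G S z ∈ A)
    (h₂ : ∀ z ∈ l₂, z ∉ S → avoidingComponent G S z ∈ B) (hAB : _root_.Disjoint A B) :
    l₁.Disjoint l₂ := fun z hz₁ hz₂ => by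
  by_cases hz : z ∈ S
  · exact hS z hz hz₁ hz₂
  · exact Set.disjoint_left.1 hAB (h₁ z hz₁ hz) (h₂ z hz₂ hz)

def HasCut (S : Set V) {u v : V} (P : G.Walk u v) (A₁ A₂ : Set (Set V)) : Prop :=
  ∃ a ∈ S, ∃ (P₁ : G.Walk u a) (P₂ : G.Walk a v), P = P₁.append P₂ ∧
    (∀ z ∈ P₁.support, z ∉ S → avoidingComponent G S z ∈ A₁) ∧
    (∀ z ∈ P₂.support, z ∉ S → avoidingComponent G S z ∈ A₂)

theorem HasCut.reverse {u v : V} {P : G.Walk u v} {A₁ A₂ : Set (Set V)}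
    (h : HasCut S P A₁ A₂) : HasCut S P.reverse A₂ A₁ := by
  obtain ⟨a, ha, P₁, P₂, rfl, h₁, h₂⟩ := h
  exact ⟨a, ha, P₂.reverse, P₁.reverse, Walk.reverse_append _ _,
    fun z hz => h₂ z (by simpa using hz), fun z hz => h₁ z (by simpa using hz)⟩

theorem not_disjoint_cuts {u₁ v₁ u₂ v₂ : V} {P : G.Walk u₁ v₁} {Q : G.Walk u₂ v₂}
    {A₁ A₂ B₁ B₂ : Set (Set V)} (hK : G.IsClique S) (hP : IsLongestPath G P)
    (hQ : IsLongestPath G Q) (hPQ : ∀ z ∈ S, z ∈ P.support → z ∉ Q.support)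
    (hPc : HasCut S P A₁ A₂) (hQc : HasCut S Q B₁ B₂) :
    ¬(Disjoint A₁ B₁ ∧ Disjoint A₂ B₂) := by
  rintro ⟨hAB₁, hAB₂⟩
  obtain ⟨a, ha, P₁, P₂, rfl, hP₁, hP₂⟩ := hPc
  obtain ⟨b, hb, Q₁, Q₂, rfl, hQ₁, hQ₂⟩ := hQc
  have hab : G.Adj a b := hK ha hb fun h => hPQ a ha (by simp) (by simp [h])
  have hPQ₁ : P₁.support.Disjoint Q₁.support := .of_avoidingComponent
    (fun z hz h₁ h₂ => hPQ z hz (by simp [h₁]) (by simp [h₂])) hP₁ hQ₁ hAB₁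
  have hPQ₂ : P₂.reverse.support.Disjoint Q₂.reverse.support := .of_avoidingComponent
    (fun z hz h₁ h₂ => hPQ z hz (by simp_all) (by simp_all)) (by simpa using hP₂)
    (by simpa using hQ₂) hAB₂
  have h₁ := hP.2 _ (hP.1.of_append_left.append_cons_reverse hQ.1.of_append_left hPQ₁ hab)
  have h₂ := hQ.2 _ (hP.1.of_append_right.reverse.append_cons_reverse
    hQ.1.of_append_right.reverse hPQ₂ hab)
  simp only [Walk.length_append, Walk.length_cons, Walk.length_reverse] at h₁ h₂
  omega

end

def halves {α : Type*} (x₁ x₂ x₃ : α) : List (Set α × Set α) :=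
  [({x₁}, {x₂, x₃}), ({x₁, x₃}, {x₂})]

/-- Pair the ends so that `xᵢ ≠ yᵢ`; then put `x₃` on a side `i` with `x₃ ≠ yᵢ` and `y₃` on a side
`j` with `y₃ ≠ xⱼ`, where `j ≠ i` can be arranged whenever `x₃ = y₃`. -/
theorem exists_disjoint_halves {α : Type*} {x₁ x₂ x₃ y₁ y₂ y₃ : α} (hx : x₁ ≠ x₂)
    (hy : y₁ ≠ y₂) :
    ∃ A ∈ halves x₁ x₂ x₃, ∃ B ∈ halves y₁ y₂ y₃,
      (Disjoint A.1 B.1 ∧ Disjoint A.2 B.2) ∨ (Disjoint A.1 B.2 ∧ Disjoint A.2 B.1) := by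
  simp only [halves, List.mem_cons, List.not_mem_nil, or_false, exists_eq_or_imp, exists_eq_left,
    Set.disjoint_insert_right, Set.disjoint_singleton_right, Set.mem_insert_iff,
    Set.mem_singleton_iff]
  grind

section

variable {V : Type*} [DecidableEq V] {G : SimpleGraph V} {S : Set V}

theorem connAvoiding_of_isPath {s t x : V} {p : G.Walk s t} (hp : p.IsPath)
    (hS : ∀ z ∈ p.support, z ∈ S → z = t) (hx : x ∈ p.support) (hxS : x ∉ S) :
    ConnAvoiding G S s x := by
  refine ⟨p.takeUntil x hx, fun z hz hzS => ?_⟩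
  obtain rfl := hS z (p.support_takeUntil_subset_support hx hz) hzS
  have hp' : ((p.takeUntil x hx).append (p.dropUntil x hx)).IsPath := by
    rwa [p.take_spec hx]
  exact hp'.ne_of_mem_support_of_append (by rintro rfl; exact hxS hzS) hz
    (Walk.end_mem_support _) rfl

theorem exists_connAvoiding_of_isPath {s t : V} {p : G.Walk s t} (hp : p.IsPath)
    (hS : ∀ z ∈ p.support, z ∈ S → z = s ∨ z = t) :
    ∃ w, ∀ z ∈ p.support, z ∉ S → ConnAvoiding G S w z := by
  by_cases hs : s ∈ S
  · cases p with
    | nil => exact ⟨s, fun z hz hzS => by simp_all⟩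
    | cons h q =>
      have hsq : s ∉ q.support := ((Walk.cons_isPath_iff h q).1 hp).2
      refine ⟨_, fun z hz hzS => connAvoiding_of_isPath hp.of_cons (fun y hy hyS => ?_)
        (by simpa [Ne.symm (ne_of_mem_of_not_mem hs hzS)] using hz) hzS⟩
      exact (hS y (by simp [hy]) hyS).resolve_left (by rintro rfl; exact hsq hy)
  · exact ⟨s, fun z hz hzS => connAvoiding_of_isPath hp
      (fun y hy hyS => (hS y hy hyS).resolve_left (by rintro rfl; exact hs hyS)) hz hzS⟩

theorem exists_hasCut_halves {K : Finset V} {u v : V} {P : G.Walk u v} (hP : P.IsPath)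
    (huv : ¬ConnAvoiding G K u v) (htouch : (P.support.toFinset ∩ K).card ≤ 2) :
    ∃ x, ∀ A ∈ halves (avoidingComponent G K u) (avoidingComponent G K v) x,
      HasCut (K : Set V) P A.1 A.2 := by
  obtain ⟨a₁, ha₁, Pu, Pr, rfl, hPu⟩ :=
    P.exists_eq_append_first_mem (by by_contra! h; exact huv ⟨P, h⟩)
  obtain ⟨a₂, ha₂, Pv, M, hPr, hPv⟩ :=
    Pr.reverse.exists_eq_append_first_mem ⟨a₁, by simp, ha₁⟩
  obtain rfl : Pr = M.reverse.append Pv.reverse := by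
    rw [← Pr.reverse_reverse, hPr, Walk.reverse_append]
  have hMpath : M.IsPath := (Walk.isPath_reverse_iff M).1 hP.of_append_right.of_append_left
  have hM : ∀ z ∈ M.support, z ∈ (K : Set V) → z = a₂ ∨ z = a₁ := by
    by_cases h : a₁ = a₂
    · subst h
      simp [Walk.nil_iff_support_eq.1 (Walk.isPath_iff_nil.1 hMpath)]
    · intro z hz hzK
      have hmem : ∀ y ∈ M.support, y ∈ (K : Set V) →
          y ∈ (Pu.append (M.reverse.append Pv.reverse)).support.toFinset ∩ K :=
        fun y hy hyK => by simp_all [Walk.mem_support_append_iff]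
      exact Finset.eq_or_eq_of_card_le_two htouch (hmem a₂ M.start_mem_support ha₂)
        (hmem a₁ M.end_mem_support ha₁) (Ne.symm h) (hmem z hz hzK)
  obtain ⟨w, hw⟩ := exists_connAvoiding_of_isPath hMpath hM
  have hcu : ∀ z ∈ Pu.support, z ∉ (K : Set V) →
      avoidingComponent G K z = avoidingComponent G K u := fun z hz hzK =>
    (connAvoiding_of_isPath hP.of_append_left hPu hz hzK).symm.avoidingComponent_eq
  have hcv : ∀ z ∈ Pv.support, z ∉ (K : Set V) →
      avoidingComponent G K z = avoidingComponent G K v := fun z hz hzK =>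
    (connAvoiding_of_isPath ((Walk.isPath_reverse_iff Pv).1
      hP.of_append_right.of_append_right) hPv hz hzK).symm.avoidingComponent_eq
  have hcw : ∀ z ∈ M.support, z ∉ (K : Set V) →
      avoidingComponent G K z = avoidingComponent G K w := fun z hz hzK =>
    (hw z hz hzK).symm.avoidingComponent_eq
  refine ⟨avoidingComponent G K w, ?_⟩
  simp only [halves, List.mem_cons, List.not_mem_nil, or_false, forall_eq_or_imp, forall_eq]
  refine ⟨⟨a₁, ha₁, Pu, _, rfl, ?_, ?_⟩,
    ⟨a₂, ha₂, Pu.append M.reverse, Pv.reverse, Walk.append_assoc _ _ _, ?_, ?_⟩⟩ <;>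
  · intro z hz hzK
    grind [Walk.mem_support_append_iff, Walk.support_reverse]

end

theorem extreme_separated_meet_in_clique_general {V : Type*} [DecidableEq V]
    (G : SimpleGraph V) (K : Finset V) (hK : G.IsClique (↑K))
    ⦃u₁ v₁ u₂ v₂ : V⦄ (P : G.Walk u₁ v₁) (Q : G.Walk u₂ v₂)
    (hPlong : IsLongestPath G P) (hQlong : IsLongestPath G Q)
    (hPsep : ExtremeSeparated G (↑K) P) (hQsep : ExtremeSeparated G (↑K) Q)
    (hPtouch : (P.support.toFinset ∩ K).card ≤ 2)
    (hQtouch : (Q.support.toFinset ∩ K).card ≤ 2) :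
    ∃ x ∈ K, x ∈ P.support ∧ x ∈ Q.support := by
  by_contra! hPQ
  obtain ⟨-, -, -, -, hv₁, hP⟩ := hPsep
  obtain ⟨-, -, -, -, hv₂, hQ⟩ := hQsep
  obtain ⟨x, hx⟩ := exists_hasCut_halves hPlong.1 hP hPtouch
  obtain ⟨y, hy⟩ := exists_hasCut_halves hQlong.1 hQ hQtouch
  obtain ⟨A, hA, B, hB, hAB | hAB⟩ := exists_disjoint_halves (x₃ := x) (y₃ := y)
    (avoidingComponent_ne hv₁ hP) (avoidingComponent_ne hv₂ hQ)
  · exact not_disjoint_cuts hK hPlong hQlong hPQ (hx A hA) (hy B hB) hAB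
  · exact not_disjoint_cuts hK hPlong hQlong.reverse (by simpa using hPQ) (hx A hA)
      (hy B hB).reverse hAB

/-- Two longest paths of `G` that are extreme-separated by a clique `K` and touch `K`
at most twice have a common vertex belonging to `K`. -/
theorem extreme_separated_meet_in_clique {V : Type*} [Fintype V] [DecidableEq V]
    (G : SimpleGraph V) (K : Finset V) (hK : G.IsClique (↑K))
    ⦃u₁ v₁ u₂ v₂ : V⦄ (P : G.Walk u₁ v₁) (Q : G.Walk u₂ v₂)
    (hPlong : IsLongestPath G P) (hQlong : IsLongestPath G Q)
    (hPsep : ExtremeSeparated G (↑K) P) (hQsep : ExtremeSeparated G (↑K) Q)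
    (hPtouch : (P.support.toFinset ∩ K).card ≤ 2)
    (hQtouch : (Q.support.toFinset ∩ K).card ≤ 2) :
    ∃ x ∈ K, x ∈ P.support ∧ x ∈ Q.support :=
  extreme_separated_meet_in_clique_general G K hK (u₁ := u₁) (v₁ := v₁) (u₂ := u₂) (v₂ := v₂) P Q
    hPlong hQlong hPsep hQsep hPtouch hQtouch
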